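/- arXiv:1105.1118 — 8 statements merged into one kernel-verified Lean document; each statement's English description precedes it below -/
import Mathlib

section
/- For κ ∈ [-1,1] with |κ| ≥ κ₋ > 0, for every α ≥ 1 and every real u, exp_κ(αu) ≤ α^(1/κ₋) · exp_κ(u). -/
/-- The Kaniadakis κ-exponential: `exp_κ(u) = (κu + √(1+κ²u²))^(1/κ)`. -/
noncomputable def kexp (κ u : ℝ) : ℝ :=
  (κ * u + Real.sqrt (1 + κ ^ 2 * u ^ 2)) ^ (1 / κ)

lemma kexp_base_pos (κ u : ℝ) : 0 < κ * u + Real.sqrt (1 + κ ^ 2 * u ^ 2) := by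
  have h1 : Real.sqrt ((κ * u) ^ 2) < Real.sqrt (1 + κ ^ 2 * u ^ 2) := by
    apply Real.sqrt_lt_sqrt (sq_nonneg _)
    nlinarith
  rw [Real.sqrt_sq_eq_abs] at h1
  have := neg_abs_le (κ * u)
  linarith

lemma kexp_neg_kappa (κ u : ℝ) (hκ : κ ≠ 0) : kexp κ u = kexp (-κ) u := by
  have hg := kexp_base_pos κ u
  have hs : Real.sqrt (1 + κ ^ 2 * u ^ 2) ^ 2 = 1 + κ ^ 2 * u ^ 2 :=
    Real.sq_sqrt (by nlinarith [sq_nonneg (κ * u)])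
  have hinv : -κ * u + Real.sqrt (1 + (-κ) ^ 2 * u ^ 2)
      = (κ * u + Real.sqrt (1 + κ ^ 2 * u ^ 2))⁻¹ := by
    apply eq_inv_of_mul_eq_one_left
    have : ((-κ) ^ 2 : ℝ) = κ ^ 2 := by ring
    rw [this]
    nlinarith
  unfold kexp
  rw [hinv]
  rw [Real.inv_rpow hg.le]
  rw [show (1 / (-κ) : ℝ) = -(1/κ) by ring, Real.rpow_neg hg.le, inv_inv]

lemma kexp_scale_aux (κ κm : ℝ) (hκ : 0 < κ) (hκm : 0 < κm) (hlow : κm ≤ κ) :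
    ∀ α : ℝ, 1 ≤ α → ∀ u : ℝ, kexp κ (α * u) ≤ α ^ (1 / κm) * kexp κ u := by
  intro α hα u
  have hα0 : (0:ℝ) < α := by linarith
  set g := κ * u + Real.sqrt (1 + κ ^ 2 * u ^ 2) with hgdef
  have hg : 0 < g := kexp_base_pos κ u
  have hga : 0 < κ * (α * u) + Real.sqrt (1 + κ ^ 2 * (α * u) ^ 2) := kexp_base_pos κ (α * u)
  -- scaling of the base
  have hsqrt : Real.sqrt (1 + κ ^ 2 * (α * u) ^ 2) ≤ α * Real.sqrt (1 + κ ^ 2 * u ^ 2) := by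
    have : α * Real.sqrt (1 + κ ^ 2 * u ^ 2) = Real.sqrt (α ^ 2 * (1 + κ ^ 2 * u ^ 2)) := by
      rw [Real.sqrt_mul (sq_nonneg α), Real.sqrt_sq hα0.le]
    rw [this]
    apply Real.sqrt_le_sqrt
    nlinarith [sq_nonneg (κ * u)]
  have hbase : κ * (α * u) + Real.sqrt (1 + κ ^ 2 * (α * u) ^ 2) ≤ α * g := by
    have : κ * (α * u) = α * (κ * u) := by ring
    rw [this, hgdef]
    nlinarith
  have hexp1 : (1:ℝ) ≤ κ / κm := (one_le_div hκm).mpr hlow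
  have hαle : α ≤ α ^ (κ / κm) := by
    calc α = α ^ (1:ℝ) := (Real.rpow_one α).symm
    _ ≤ α ^ (κ / κm) := Real.rpow_le_rpow_of_exponent_le hα hexp1
  have hbase2 : κ * (α * u) + Real.sqrt (1 + κ ^ 2 * (α * u) ^ 2) ≤ α ^ (κ / κm) * g := by
    calc _ ≤ α * g := hbase
    _ ≤ α ^ (κ / κm) * g := by nlinarith
  have h1κ : (0:ℝ) ≤ 1 / κ := by positivity
  unfold kexp
  calc (κ * (α * u) + Real.sqrt (1 + κ ^ 2 * (α * u) ^ 2)) ^ (1 / κ)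
      ≤ (α ^ (κ / κm) * g) ^ (1 / κ) := Real.rpow_le_rpow hga.le hbase2 h1κ
    _ = (α ^ (κ / κm)) ^ (1 / κ) * g ^ (1 / κ) :=
        Real.mul_rpow (Real.rpow_nonneg hα0.le _) hg.le
    _ = α ^ (1 / κm) * g ^ (1 / κ) := by
        have h : κ / κm * (1 / κ) = 1 / κm := by
          field_simp
        rw [← Real.rpow_mul hα0.le, h]

theorem kexp_scale_bound (κ κm : ℝ) (hκ : κ ∈ Set.Icc (-1 : ℝ) 1)
    (hκm : 0 < κm) (hlow : κm ≤ |κ|) :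
    ∀ α : ℝ, 1 ≤ α → ∀ u : ℝ, kexp κ (α * u) ≤ α ^ (1 / κm) * kexp κ u := by
  intro α hα u
  have hκne : κ ≠ 0 := by
    intro h; rw [h] at hlow; simp at hlow; linarith
  rcases lt_or_gt_of_ne hκne with hneg | hpos
  · rw [kexp_neg_kappa κ (α * u) hκne, kexp_neg_kappa κ u hκne]
    have habs : |κ| = -κ := abs_of_neg hneg
    exact kexp_scale_aux (-κ) κm (by linarith) hκm (by rw [habs] at hlow; exact hlow) α hα u
  · have habs : |κ| = κ := abs_of_pos hpos
    exact kexp_scale_aux κ κm hpos hκm (by rw [habs] at hlow; exact hlow) α hα u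
end

section
/- For each fixed κ ∈ (0,1], the function u ↦ exp_κ(u) = (κu + √(1+κ²u²))^(1/κ) is strictly convex on ℝ. -/
lemma add_sqrt_pos_aux (t : ℝ) : 0 < t + Real.sqrt (1 + t ^ 2) := by
  have h1 : |t| < Real.sqrt (1 + t ^ 2) := by
    have : Real.sqrt (t ^ 2) < Real.sqrt (1 + t ^ 2) :=
      Real.sqrt_lt_sqrt (sq_nonneg t) (by linarith)
    rwa [Real.sqrt_sq_eq_abs] at this
  nlinarith [neg_abs_le t]

lemma kexp_eq (κ : ℝ) (hκ : κ ≠ 0) (u : ℝ) :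
    kexp κ u = Real.exp (Real.arsinh (κ * u) / κ) := by
  have h : 1 + κ ^ 2 * u ^ 2 = 1 + (κ * u) ^ 2 := by ring
  rw [kexp, h, Real.rpow_def_of_pos (add_sqrt_pos_aux (κ * u)), Real.arsinh]
  ring_nf

lemma hasDerivAt_sκ (κ u : ℝ) :
    HasDerivAt (fun u => Real.sqrt (1 + (κ * u) ^ 2))
      (κ ^ 2 * u / Real.sqrt (1 + (κ * u) ^ 2)) u := by
  have hq : HasDerivAt (fun u : ℝ => 1 + (κ * u) ^ 2) (2 * (κ * u) ^ 1 * κ) u := by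
    have h := (((hasDerivAt_id u).const_mul κ).pow 2).const_add (1:ℝ)
    simpa using h
  have hpos : (0:ℝ) < 1 + (κ * u) ^ 2 := by positivity
  have h := (Real.hasDerivAt_sqrt hpos.ne').comp u hq
  refine h.congr_deriv ?_
  have : Real.sqrt (1 + (κ * u) ^ 2) ≠ 0 := by positivity
  field_simp

lemma hasDerivAt_kexp (κ : ℝ) (hκ : κ ≠ 0) (u : ℝ) :
    HasDerivAt (kexp κ)
      (Real.exp (Real.arsinh (κ * u) / κ) * (Real.sqrt (1 + (κ * u) ^ 2))⁻¹) u := by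
  have ha : HasDerivAt (fun u => Real.arsinh (κ * u))
      ((Real.sqrt (1 + (κ * u) ^ 2))⁻¹ * κ) u :=
    by
      have hmul : HasDerivAt (fun y : ℝ => κ * y) κ u := by
        simpa using (hasDerivAt_id u).const_mul κ
      exact (Real.hasDerivAt_arsinh (κ * u)).comp u hmul
  have hg : HasDerivAt (fun u => Real.arsinh (κ * u) / κ)
      ((Real.sqrt (1 + (κ * u) ^ 2))⁻¹) u := by
    have := ha.div_const κ
    rwa [mul_div_assoc, div_self hκ, mul_one] at this
  have hf := hg.exp
  exact hf.congr_of_eventuallyEq (Filter.Eventually.of_forall fun x => kexp_eq κ hκ x)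

theorem kexp_strictConvexOn (κ : ℝ) (hκ : κ ∈ Set.Ioc (0 : ℝ) 1) :
    StrictConvexOn ℝ Set.univ (kexp κ) := by
  obtain ⟨hκ0, hκ1⟩ := hκ
  have hκ0' : κ ≠ 0 := hκ0.ne'
  set S : ℝ → ℝ := fun u => Real.sqrt (1 + (κ * u) ^ 2) with hS
  have hSpos : ∀ u, 0 < S u := fun u => Real.sqrt_pos.2 (by positivity)
  have hderiv : deriv (kexp κ) = fun u => kexp κ u * (S u)⁻¹ := by
    funext u
    rw [kexp_eq κ hκ0' u]
    exact (hasDerivAt_kexp κ hκ0' u).deriv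
  apply strictConvexOn_of_deriv2_pos convex_univ (by
    exact Continuous.continuousOn (by
      have : Continuous (fun u => Real.exp (Real.arsinh (κ * u) / κ)) := by
        continuity
      exact this.congr fun u => (kexp_eq κ hκ0' u).symm))
  intro u _
  have h2 : HasDerivAt (deriv (kexp κ))
      ((Real.exp (Real.arsinh (κ * u) / κ) * (S u)⁻¹) * (S u)⁻¹ +
        kexp κ u * (-(κ ^ 2 * u / S u) / (S u) ^ 2)) u := by
    rw [hderiv]
    have h1 := hasDerivAt_kexp κ hκ0' u
    have hinv := (hasDerivAt_sκ κ u).inv (hSpos u).ne'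
    have := h1.mul hinv
    exact this
  have hd2 : (deriv^[2] (kexp κ)) u =
      (Real.exp (Real.arsinh (κ * u) / κ) * (S u)⁻¹) * (S u)⁻¹ +
        kexp κ u * (-(κ ^ 2 * u / S u) / (S u) ^ 2) := by
    simp only [Function.iterate_succ, Function.iterate_zero, Function.comp_apply, id]
    exact h2.deriv
  rw [hd2, ← kexp_eq κ hκ0' u]
  have hE : kexp κ u * (S u)⁻¹ * (S u)⁻¹ + kexp κ u * (-(κ ^ 2 * u / S u) / S u ^ 2)
      = kexp κ u * (S u - κ ^ 2 * u) / (S u) ^ 3 := by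
    have h0 := (hSpos u).ne'
    field_simp
    ring
  rw [hE]
  have hkpos : 0 < kexp κ u := by rw [kexp_eq κ hκ0' u]; exact Real.exp_pos _
  have hSgt : κ ^ 2 * u < S u := by
    have hsq : (S u) ^ 2 = 1 + (κ * u) ^ 2 := Real.sq_sqrt (by positivity)
    rcases le_or_gt u 0 with h | h
    · have : κ ^ 2 * u ≤ 0 := mul_nonpos_of_nonneg_of_nonpos (sq_nonneg κ) h
      linarith [hSpos u]
    · have h1 : κ ^ 2 * u ≤ κ * u := by nlinarith [mul_pos hκ0 h]
      have h2 : κ * u < S u := by nlinarith [hSpos u, mul_pos hκ0 h]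
      linarith
  exact div_pos (mul_pos hkpos (by linarith)) (pow_pos (hSpos u) 3)
end

section
/- Let φ: T × ℝ → (0,∞) satisfy: φ(t,·) is convex, continuous, strictly increasing with φ(t,u) → 0 as u → −∞ and φ(t,u) → ∞ as u → ∞ for μ-a.e. t, and u₀ > 0 measurable with ∫ φ(c + λu₀) dμ < ∞ for all λ > 0. If ∫ φ(c + (1+ε)u) dμ < ∞ for some ε > 0, then there exists a unique ψ(u) ∈ ℝ such that ∫ φ(t, c(t) + u(t) − ψ(u)·u₀(t)) dμ(t) = 1. -/
open MeasureTheory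

theorem exists_unique_normalizing_constant {T : Type*} [MeasurableSpace T]
    (μ : Measure T) [SigmaFinite μ]
    (φ : T → ℝ → ℝ) (hφm : Measurable (Function.uncurry φ))
    (hpos : ∀ᵐ t ∂μ, ∀ x : ℝ, 0 < φ t x)
    (hconv : ∀ᵐ t ∂μ, ConvexOn ℝ Set.univ (φ t))
    (hcont : ∀ᵐ t ∂μ, Continuous (φ t))
    (hmono : ∀ᵐ t ∂μ, StrictMono (φ t))
    (hbot : ∀ᵐ t ∂μ, Filter.Tendsto (φ t) Filter.atBot (nhds 0))
    (htop : ∀ᵐ t ∂μ, Filter.Tendsto (φ t) Filter.atTop Filter.atTop)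
    (c u u₀ : T → ℝ) (hc : Measurable c) (hu : Measurable u) (hu₀ : Measurable u₀)
    (hu₀pos : ∀ t, 0 < u₀ t)
    (hcprob : ∫ t, φ t (c t) ∂μ = 1)
    (hint₀ : ∀ lam : ℝ, 0 < lam → Integrable (fun t => φ t (c t + lam * u₀ t)) μ)
    (ε : ℝ) (hε : 0 < ε)
    (hint : Integrable (fun t => φ t (c t + (1 + ε) * u t)) μ) :
    ∃! ψ : ℝ, ∫ t, φ t (c t + u t - ψ * u₀ t) ∂μ = 1 := by
  classical
  have meas : ∀ (v : T → ℝ), Measurable v → Measurable fun t => φ t (v t) := fun v hv =>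
    hφm.comp (measurable_id.prodMk hv)
  have hμ : μ ≠ 0 := by
    rintro rfl; simp at hcprob
  have hεd : (0:ℝ) < 1 + ε := by linarith
  -- integrability for every ψ
  have key_int : ∀ ψ : ℝ, Integrable (fun t => φ t (c t + u t - ψ * u₀ t)) μ := by
    intro ψ
    set s : ℝ := max (-(ψ * (1 + ε) / ε)) 1 with hs_def
    have hs : (0:ℝ) < s := lt_of_lt_of_le one_pos (le_max_right _ _)
    have hbint : Integrable (fun t => (1/(1+ε)) * φ t (c t + (1+ε) * u t)
        + (ε/(1+ε)) * φ t (c t + s * u₀ t)) μ :=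
      (hint.const_mul _).add ((hint₀ s hs).const_mul _)
    refine hbint.mono' ((meas _ (by fun_prop)).aestronglyMeasurable) ?_
    filter_upwards [hpos, hconv, hmono] with t hp hcv hm
    rw [Real.norm_eq_abs, abs_of_pos (hp _)]
    have key : c t + u t - ψ * u₀ t
        = (1/(1+ε)) • (c t + (1+ε) * u t) + (ε/(1+ε)) • (c t + (-(ψ * (1+ε) / ε)) * u₀ t) := by
      simp only [smul_eq_mul]; field_simp; ring
    have hsum : 1/(1+ε) + ε/(1+ε) = 1 := by
      rw [← add_div, div_self hεd.ne']
    have h1 : φ t ((1/(1+ε)) • (c t + (1+ε) * u t)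
          + (ε/(1+ε)) • (c t + (-(ψ * (1+ε) / ε)) * u₀ t))
        ≤ (1/(1+ε)) • φ t (c t + (1+ε) * u t)
          + (ε/(1+ε)) • φ t (c t + (-(ψ * (1+ε) / ε)) * u₀ t) :=
      hcv.2 (Set.mem_univ _) (Set.mem_univ _)
        (div_nonneg one_pos.le hεd.le) (div_nonneg hε.le hεd.le) hsum
    rw [← key] at h1
    simp only [smul_eq_mul] at h1
    have hle : -(ψ * (1+ε) / ε) ≤ s := le_max_left _ _
    have h2 : φ t (c t + (-(ψ * (1+ε) / ε)) * u₀ t) ≤ φ t (c t + s * u₀ t) := by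
      apply hm.monotone
      have := mul_le_mul_of_nonneg_right hle (hu₀pos t).le
      linarith
    have h3 := mul_le_mul_of_nonneg_left h2 (by positivity : (0:ℝ) ≤ ε/(1+ε))
    linarith
  set F : ℝ → ℝ := fun ψ => ∫ t, φ t (c t + u t - ψ * u₀ t) ∂μ with hFdef
  -- F is strictly antitone
  have hanti : StrictAnti F := by
    intro ψ₁ ψ₂ h12
    have hlt : 0 < F ψ₁ - F ψ₂ := by
      rw [hFdef]
      simp only
      rw [← integral_sub (key_int ψ₁) (key_int ψ₂)]
      set g : T → ℝ := fun t => φ t (c t + u t - ψ₁ * u₀ t) - φ t (c t + u t - ψ₂ * u₀ t)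
        with hgdef
      have hgpos : ∀ᵐ t ∂μ, 0 < g t := by
        filter_upwards [hmono] with t hm
        have : φ t (c t + u t - ψ₂ * u₀ t) < φ t (c t + u t - ψ₁ * u₀ t) := by
          apply hm
          have := mul_lt_mul_of_pos_right h12 (hu₀pos t)
          linarith
        simpa [hgdef] using sub_pos.2 this
      refine (integral_pos_iff_support_of_nonneg_ae
        (hgpos.mono fun t ht => ht.le) ((key_int ψ₁).sub (key_int ψ₂))).2 ?_
      have hsupp : μ (Function.support g)ᶜ = 0 := by
        have hae : ∀ᵐ t ∂μ, t ∈ Function.support g :=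
          hgpos.mono fun t ht => Function.mem_support.2 ht.ne'
        rw [Function.compl_support]
        simpa [MeasureTheory.ae_iff] using hae
      have huniv : μ Set.univ ≤ μ (Function.support g) := by
        calc μ Set.univ = μ (Function.support g ∪ (Function.support g)ᶜ) := by
              rw [Set.union_compl_self]
          _ ≤ μ (Function.support g) + μ (Function.support g)ᶜ := measure_union_le _ _
          _ = μ (Function.support g) := by rw [hsupp, add_zero]
      have : μ Set.univ ≠ 0 := Measure.measure_univ_ne_zero.2 hμ
      exact lt_of_lt_of_le (pos_iff_ne_zero.2 this) huniv
    linarith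
  -- F is continuous
  have hFcont : Continuous F := by
    rw [continuous_iff_continuousAt]
    intro x₀
    apply continuousAt_of_dominated (bound := fun t => φ t (c t + u t - (x₀ - 1) * u₀ t))
    · exact Filter.Eventually.of_forall fun ψ => (meas _ (by fun_prop)).aestronglyMeasurable
    · filter_upwards [Ioi_mem_nhds (show x₀ - 1 < x₀ by linarith)] with ψ hψ
      filter_upwards [hpos, hmono] with t hp hm
      rw [Real.norm_eq_abs, abs_of_pos (hp _)]
      apply hm.monotone
      have := mul_le_mul_of_nonneg_right (le_of_lt (Set.mem_Ioi.1 hψ)) (hu₀pos t).le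
      linarith
    · exact key_int (x₀ - 1)
    · filter_upwards [hcont] with t hct
      exact (hct.comp (by fun_prop)).continuousAt
  -- F tends to 0 along ℕ
  have hsmall : ∃ b : ℝ, F b < 1 := by
    have htend0 : Filter.Tendsto (fun n : ℕ => F n) Filter.atTop (nhds (0:ℝ)) := by
      have h0 : (0:ℝ) = ∫ t, (0:ℝ) ∂μ := by simp
      rw [h0]
      apply tendsto_integral_of_dominated_convergence
        (fun t => φ t (c t + u t - 0 * u₀ t))
        (fun n => (meas _ (by fun_prop)).aestronglyMeasurable) (key_int 0)
      · intro n
        filter_upwards [hpos, hmono] with t hp hm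
        rw [Real.norm_eq_abs, abs_of_pos (hp _)]
        apply hm.monotone
        have : (0:ℝ) ≤ (n:ℝ) * u₀ t := mul_nonneg (Nat.cast_nonneg n) (hu₀pos t).le
        linarith
      · filter_upwards [hbot] with t hbt
        have harg : Filter.Tendsto (fun n : ℕ => c t + u t - (n:ℝ) * u₀ t)
            Filter.atTop Filter.atBot := by
          simp only [sub_eq_add_neg]
          apply Filter.tendsto_atBot_add_const_left
          exact Filter.tendsto_neg_atTop_atBot.comp
            (Filter.Tendsto.atTop_mul_const (hu₀pos t) tendsto_natCast_atTop_atTop)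
        exact hbt.comp harg
    obtain ⟨n, hn⟩ := (htend0.eventually (eventually_lt_nhds (by norm_num : (0:ℝ) < 1))).exists
    exact ⟨n, hn⟩
  -- F exceeds 1 somewhere
  have hlarge : ∃ a : ℝ, 1 < F a := by
    by_contra hcon
    push_neg at hcon
    set f : ℕ → T → ENNReal := fun n t =>
      ENNReal.ofReal (φ t (c t + u t - (-(n:ℝ)) * u₀ t)) with hfdef
    have hmonot : ∀ᵐ t ∂μ, Monotone fun n : ℕ => f n t := by
      filter_upwards [hmono] with t hm
      intro m n hmn
      apply ENNReal.ofReal_le_ofReal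
      apply hm.monotone
      have : (m:ℝ) * u₀ t ≤ (n:ℝ) * u₀ t :=
        mul_le_mul_of_nonneg_right (by exact_mod_cast hmn) (hu₀pos t).le
      linarith
    have htd : ∀ᵐ t ∂μ, Filter.Tendsto (fun n : ℕ => f n t) Filter.atTop
        (nhds ((fun _ : T => (⊤ : ENNReal)) t)) := by
      filter_upwards [htop] with t htt
      have harg : Filter.Tendsto (fun n : ℕ => c t + u t - (-(n:ℝ)) * u₀ t)
          Filter.atTop Filter.atTop := by
        simp only [neg_mul, sub_neg_eq_add]
        apply Filter.tendsto_atTop_add_const_left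
        exact Filter.Tendsto.atTop_mul_const (hu₀pos t) tendsto_natCast_atTop_atTop
      exact ENNReal.tendsto_ofReal_atTop.comp (htt.comp harg)
    have hL := lintegral_tendsto_of_tendsto_of_monotone
      (fun n => ((meas _ (by fun_prop)).ennreal_ofReal).aemeasurable) hmonot htd
    have htopint : ∫⁻ _ : T, (⊤ : ENNReal) ∂μ = ⊤ := by
      rw [lintegral_const]
      exact ENNReal.top_mul (Measure.measure_univ_ne_zero.2 hμ)
    rw [htopint] at hL
    have hle : ∀ n : ℕ, (∫⁻ t, f n t ∂μ) ≤ 1 := by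
      intro n
      have hi := key_int (-(n:ℝ))
      have hnn : 0 ≤ᵐ[μ] fun t => φ t (c t + u t - (-(n:ℝ)) * u₀ t) := by
        filter_upwards [hpos] with t hp using (hp _).le
      rw [hfdef]
      simp only
      rw [← ofReal_integral_eq_lintegral_ofReal hi hnn]
      calc ENNReal.ofReal (∫ t, φ t (c t + u t - (-(n:ℝ)) * u₀ t) ∂μ)
          ≤ ENNReal.ofReal 1 := ENNReal.ofReal_le_ofReal (hcon _)
        _ = 1 := by simp
    have : (⊤ : ENNReal) ≤ 1 := le_of_tendsto' hL hle
    simp at this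
  obtain ⟨a, ha⟩ := hlarge
  obtain ⟨b, hb⟩ := hsmall
  have hab : a < b := by
    by_contra h
    push_neg at h
    have := hanti.antitone h
    linarith
  have h1mem : (1:ℝ) ∈ Set.Icc (F b) (F a) := ⟨hb.le, ha.le⟩
  obtain ⟨ψ, _, hψ⟩ := intermediate_value_Icc' hab.le hFcont.continuousOn h1mem
  refine ⟨ψ, hψ, fun y hy => hanti.injective (hy.trans hψ.symm)⟩
end

section
/- Let φ(t,·) be convex and differentiable for a.e. t. If u, v ∈ K and λ ∈ (0,1), and ψ(u), ψ(v), ψ(λu+(1−λ)v) are the unique reals such that ∫ φ(c + w − ψ(w)u₀) dμ = 1 for w ∈ {u, v, λu+(1−λ)v}, then ψ(λu + (1−λ)v) ≤ λψ(u) + (1−λ)ψ(v). That is, the normalizing function ψ is convex. -/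
open MeasureTheory

/-- Convexity of the normalizing function ψ. -/
theorem normalizing_function_convex {T : Type*} [MeasurableSpace T]
    (μ : Measure T) [SigmaFinite μ]
    (φ : T → ℝ → ℝ) (hφm : Measurable (Function.uncurry φ))
    (hpos : ∀ᵐ t ∂μ, ∀ x : ℝ, 0 < φ t x)
    (hconv : ∀ᵐ t ∂μ, ConvexOn ℝ Set.univ (φ t))
    (hdiff : ∀ᵐ t ∂μ, Differentiable ℝ (φ t))
    (hmono : ∀ᵐ t ∂μ, StrictMono (φ t))
    (c u v u₀ : T → ℝ) (hc : Measurable c) (hu : Measurable u) (hv : Measurable v)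
    (hu₀ : Measurable u₀) (hu₀pos : ∀ t, 0 < u₀ t)
    -- u and v belong to K, i.e. φ(c + λ·) is integrable for λ in a neighborhood of [0,1]
    (hKu : ∃ ε > (0 : ℝ), ∀ lam ∈ Set.Ioo (-ε) (1 + ε),
      Integrable (fun t => φ t (c t + lam * u t)) μ)
    (hKv : ∃ ε > (0 : ℝ), ∀ lam ∈ Set.Ioo (-ε) (1 + ε),
      Integrable (fun t => φ t (c t + lam * v t)) μ)
    (lam : ℝ) (hlam : lam ∈ Set.Ioo (0 : ℝ) 1)
    (ψu ψv ψw : ℝ)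
    (hψu : ∫ t, φ t (c t + u t - ψu * u₀ t) ∂μ = 1)
    (hψv : ∫ t, φ t (c t + v t - ψv * u₀ t) ∂μ = 1)
    (hψw : ∫ t, φ t (c t + (lam * u t + (1 - lam) * v t) - ψw * u₀ t) ∂μ = 1) :
    ψw ≤ lam * ψu + (1 - lam) * ψv := by
  by_contra hcon
  push_neg at hcon
  set fa : T → ℝ := fun t => φ t (c t + u t - ψu * u₀ t) with hfa_def
  set fb : T → ℝ := fun t => φ t (c t + v t - ψv * u₀ t) with hfb_def
  set fw : T → ℝ := fun t => φ t (c t + (lam * u t + (1 - lam) * v t) - ψw * u₀ t) with hfw_def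
  have hμ : μ ≠ 0 := by
    rintro rfl
    simp at hψu
  have hfa : Integrable fa μ := by
    by_contra h
    rw [integral_undef h] at hψu; norm_num at hψu
  have hfb : Integrable fb μ := by
    by_contra h
    rw [integral_undef h] at hψv; norm_num at hψv
  have hfw : Integrable fw μ := by
    by_contra h
    rw [integral_undef h] at hψw; norm_num at hψw
  have hae : ∀ᵐ t ∂μ, fw t < lam * fa t + (1 - lam) * fb t := by
    filter_upwards [hconv, hmono] with t hct hmt
    have h1 : c t + (lam * u t + (1 - lam) * v t) - ψw * u₀ t
        < lam * (c t + u t - ψu * u₀ t) + (1 - lam) * (c t + v t - ψv * u₀ t) := by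
      nlinarith [mul_pos (sub_pos.2 hcon) (hu₀pos t)]
    calc fw t < φ t (lam * (c t + u t - ψu * u₀ t) + (1 - lam) * (c t + v t - ψv * u₀ t)) :=
          hmt h1
      _ ≤ lam * fa t + (1 - lam) * fb t := by
          have key : φ t (lam • (c t + u t - ψu * u₀ t) + (1 - lam) • (c t + v t - ψv * u₀ t))
              ≤ lam • φ t (c t + u t - ψu * u₀ t) + (1 - lam) • φ t (c t + v t - ψv * u₀ t) :=
            hct.2 (Set.mem_univ _) (Set.mem_univ _) hlam.1.le (by linarith [hlam.2]) (by ring)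
          simpa [smul_eq_mul] using key
  set g : T → ℝ := fun t => lam * fa t + (1 - lam) * fb t - fw t with hg_def
  have hg : Integrable g μ := ((hfa.const_mul lam).add (hfb.const_mul (1 - lam))).sub hfw
  have hgpos : ∀ᵐ t ∂μ, 0 < g t := by
    filter_upwards [hae] with t ht
    simp only [hg_def]; linarith
  have e1 : Integrable (fun t => lam * fa t + (1 - lam) * fb t) μ := by
    exact (hfa.const_mul lam).add (hfb.const_mul (1 - lam))
  have e2 : Integrable (fun t => lam * fa t) μ := hfa.const_mul lam
  have e3 : Integrable (fun t => (1 - lam) * fb t) μ := hfb.const_mul (1 - lam)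
  have hint : ∫ t, g t ∂μ = 0 := by
    simp only [hg_def]
    rw [integral_sub e1 hfw, integral_add e2 e3, integral_const_mul, integral_const_mul,
      hψu, hψv, hψw]
    ring
  have hpos' : 0 < ∫ t, g t ∂μ := by
    rw [integral_pos_iff_support_of_nonneg_ae (hgpos.mono fun t ht => ht.le) hg]
    rw [pos_iff_ne_zero]
    intro h0
    have h1 : ∀ᵐ t ∂μ, g t = 0 := by
      rw [ae_iff]
      refine measure_mono_null ?_ h0
      intro t ht
      simpa [Function.mem_support] using ht
    haveI : (ae μ).NeBot := ae_neBot.2 hμ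
    obtain ⟨t, ht1, ht2⟩ := (hgpos.and h1).exists
    linarith
  rw [hint] at hpos'
  exact lt_irrefl 0 hpos'
end

section
/- Let (T,Σ,μ) be σ-finite, and let c̃, c be measurable with ∫ φ(t,c̃(t)) dμ < ∞ and ∫ φ(t,c(t)) dμ < ∞, where φ(t,·) is convex, positive, strictly increasing. If c̃ − c belongs to L^φ_c (i.e., ∫ φ(c + λ(c̃ − c)) dμ < ∞ for all |λ| small), then L^φ_{c̃} ⊆ L^φ_c, i.e., every w with ∫ φ(c̃ + λw) dμ < ∞ for all |λ| small satisfies ∫ φ(c + λw) dμ < ∞ for all |λ| small. -/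
open MeasureTheory

theorem musielak_orlicz_inclusion {T : Type*} [MeasurableSpace T]
    (μ : Measure T) [SigmaFinite μ]
    (φ : T → ℝ → ℝ) (hφm : Measurable (Function.uncurry φ))
    (hpos : ∀ᵐ t ∂μ, ∀ x : ℝ, 0 < φ t x)
    (hconv : ∀ᵐ t ∂μ, ConvexOn ℝ Set.univ (φ t))
    (hmono : ∀ᵐ t ∂μ, StrictMono (φ t))
    (ct c : T → ℝ) (hct : Measurable ct) (hc : Measurable c)
    (hcti : Integrable (fun t => φ t (ct t)) μ)
    (hci : Integrable (fun t => φ t (c t)) μ)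
    -- c̃ - c belongs to L^φ_c
    (hdiff : ∃ ε > (0 : ℝ), ∀ lam : ℝ, |lam| < ε →
      Integrable (fun t => φ t (c t + lam * (ct t - c t))) μ) :
    ∀ w : T → ℝ, Measurable w →
      (∃ ε > (0 : ℝ), ∀ lam : ℝ, |lam| < ε →
        Integrable (fun t => φ t (ct t + lam * w t)) μ) →
      ∃ ε > (0 : ℝ), ∀ lam : ℝ, |lam| < ε →
        Integrable (fun t => φ t (c t + lam * w t)) μ := by
  intro w hw hwε
  obtain ⟨ε₂, hε₂, h2⟩ := hdiff
  obtain ⟨ε₁, hε₁, h1⟩ := hwε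
  set α : ℝ := ε₂ / (2 + ε₂) with hα
  have h2ε : (0:ℝ) < 2 + ε₂ := by linarith
  have hα0 : 0 < α := div_pos hε₂ h2ε
  have hα1 : α < 1 := by
    rw [hα, div_lt_one h2ε]; linarith
  have h1α : (1 - α) = 2 / (2 + ε₂) := by
    rw [hα]; field_simp; ring
  refine ⟨α * ε₁, mul_pos hα0 hε₁, fun lam hlam => ?_⟩
  set a : ℝ := lam / α with ha
  have haε : |a| < ε₁ := by
    rw [ha, abs_div, abs_of_pos hα0, div_lt_iff₀ hα0]
    calc |lam| < α * ε₁ := hlam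
    _ = ε₁ * α := mul_comm _ _
  have hb : |(-(ε₂/2) : ℝ)| < ε₂ := by
    rw [abs_neg, abs_of_pos (by linarith)]; linarith
  have hI1 := h1 a haε
  have hI2 := h2 (-(ε₂/2)) hb
  have hmeas : AEStronglyMeasurable (fun t => φ t (c t + lam * w t)) μ := by
    have hm : Measurable (fun t => φ t (c t + lam * w t)) :=
      hφm.comp ((measurable_id.prodMk (hc.add ((measurable_const (a := lam)).mul hw))) :
        Measurable fun t => (t, c t + lam * w t))
    exact hm.aestronglyMeasurable
  refine Integrable.mono' ((hI1.const_mul α).add (hI2.const_mul (1 - α)))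
    hmeas ?_
  filter_upwards [hpos, hconv] with t hp hcv
  have key : c t + lam * w t
      = α * (ct t + a * w t) + (1 - α) * (c t + (-(ε₂/2)) * (ct t - c t)) := by
    have hε₂' : ε₂ ≠ 0 := hε₂.ne'
    have h2ε' : (2 + ε₂) ≠ 0 := h2ε.ne'
    rw [ha, hα]
    field_simp
    ring
  rw [Real.norm_eq_abs, abs_of_pos (hp _), key]
  have := hcv.2 (Set.mem_univ (ct t + a * w t))
    (Set.mem_univ (c t + (-(ε₂/2)) * (ct t - c t))) hα0.le
    (by linarith : (0:ℝ) ≤ 1 - α) (by ring)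
  simpa [smul_eq_mul] using this
end

section
/- With the hypotheses of the previous proposition, conversely: if c̃ − c does not belong to L^φ_c, then L^φ_{c̃} is not contained in L^φ_c; in fact, the function (c − c̃)·1_A, where A = {t : c̃(t) < c(t)}, belongs to L^φ_{c̃} but not to L^φ_c. -/
open MeasureTheory

theorem musielak_orlicz_non_inclusion {T : Type*} [MeasurableSpace T]
    (μ : Measure T) [SigmaFinite μ]
    (φ : T → ℝ → ℝ) (hφm : Measurable (Function.uncurry φ))
    (hpos : ∀ᵐ t ∂μ, ∀ x : ℝ, 0 < φ t x)
    (hconv : ∀ᵐ t ∂μ, ConvexOn ℝ Set.univ (φ t))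
    (hmono : ∀ᵐ t ∂μ, StrictMono (φ t))
    (ct c : T → ℝ) (hct : Measurable ct) (hc : Measurable c)
    (hcti : Integrable (fun t => φ t (ct t)) μ)
    (hci : Integrable (fun t => φ t (c t)) μ)
    -- c̃ - c does not belong to L^φ_c
    (hdiff : ¬ ∃ lam > (0 : ℝ),
      Integrable (fun t => φ t (c t + lam * |ct t - c t|)) μ) :
    (∃ lam > (0 : ℝ),
      Integrable (fun t =>
        φ t (ct t + lam * |Set.indicator {s | ct s < c s} (fun s => c s - ct s) t|)) μ) ∧
    ¬ ∃ lam > (0 : ℝ),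
      Integrable (fun t =>
        φ t (c t + lam * |Set.indicator {s | ct s < c s} (fun s => c s - ct s) t|)) μ := by
  have hAmeas : MeasurableSet {s | ct s < c s} := measurableSet_lt hct hc
  set g : T → ℝ := Set.indicator {s | ct s < c s} (fun s => c s - ct s) with hg
  have hgmeas : Measurable g := (hc.sub hct).indicator hAmeas
  have measφ : ∀ (f : T → ℝ), Measurable f → Measurable (fun t => φ t (f t)) := by
    intro f hf
    exact hφm.comp (measurable_id.prodMk hf)
  constructor
  · refine ⟨1, one_pos, ?_⟩
    have hmeas : Measurable (fun t => φ t (ct t + 1 * |g t|)) :=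
      measφ _ (hct.add (measurable_const.mul hgmeas.abs))
    refine Integrable.mono' (hcti.add hci) hmeas.aestronglyMeasurable ?_
    filter_upwards [hpos] with t hposT
    have harg : ct t + 1 * |g t| = if ct t < c t then c t else ct t := by
      by_cases h : ct t < c t
      · have : g t = c t - ct t := by simp only [hg, Set.indicator_apply, Set.mem_setOf_eq, if_pos h]
        rw [this, abs_of_nonneg (by linarith)]
        simp [h]
      · have : g t = 0 := by simp only [hg, Set.indicator_apply, Set.mem_setOf_eq, if_neg h]
        simp [this, h]
    rw [harg]
    rw [Real.norm_eq_abs, abs_of_pos (by split <;> exact hposT _)]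
    split
    · exact le_add_of_nonneg_left (le_of_lt (hposT _))
    · exact le_add_of_nonneg_right (le_of_lt (hposT _))
  · rintro ⟨lam, hlam, hint⟩
    apply hdiff
    set l := min lam (1:ℝ) with hl
    have hl0 : 0 < l := lt_min hlam one_pos
    have hl1 : l ≤ 1 := min_le_right _ _
    have hllam : l ≤ lam := min_le_left _ _
    refine ⟨l, hl0, ?_⟩
    have hmeas : Measurable (fun t => φ t (c t + l * |ct t - c t|)) :=
      measφ _ (hc.add (measurable_const.mul (hct.sub hc).abs))
    refine Integrable.mono' ((hint.add hci).add hcti) hmeas.aestronglyMeasurable ?_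
    filter_upwards [hpos, hconv, hmono] with t hposT hconvT hmonoT
    rw [Real.norm_eq_abs, abs_of_pos (hposT _)]
    simp only [Pi.add_apply]
    by_cases h : ct t < c t
    · have hgt : g t = c t - ct t := by simp only [hg, Set.indicator_apply, Set.mem_setOf_eq, if_pos h]
      have harg : c t + l * |ct t - c t| ≤ c t + lam * |g t| := by
        rw [hgt, abs_sub_comm, abs_of_nonneg (by linarith)]
        nlinarith
      calc φ t (c t + l * |ct t - c t|) ≤ φ t (c t + lam * |g t|) := hmonoT.monotone harg
        _ ≤ _ := by nlinarith [hposT (c t), hposT (ct t)]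
    · have h' : c t ≤ ct t := le_of_not_gt h
      have habs : |ct t - c t| = ct t - c t := abs_of_nonneg (by linarith)
      have harg : c t + l * |ct t - c t| = (1-l) * c t + l * ct t := by rw [habs]; ring
      rw [harg]
      have hcv := hconvT.2 (Set.mem_univ (c t)) (Set.mem_univ (ct t))
        (by linarith : (0:ℝ) ≤ 1 - l) (le_of_lt hl0) (by ring)
      simp only [smul_eq_mul] at hcv
      nlinarith [hposT (c t + lam * |g t|), hposT (c t), hposT (ct t)]
end

section
/- Let u ∈ K^φ_c, i.e. ∫ φ(c + λu) dμ < ∞ for all λ in a neighborhood of [0,1], and set c̃ = c + u − ψ(u)u₀ where ψ(u) normalizes ∫ φ(c̃) dμ = 1. Then c − c̃ = −u + ψ(u)u₀ belongs to L^φ_{c̃}, and consequently L^φ_c = L^φ_{c̃} as sets. -/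
open MeasureTheory

/-- Membership in the Musielak–Orlicz space `L^φ_b`: `φ(b + λw)` is integrable for
all `λ` in a neighborhood of `0`. -/
def memLphi {T : Type*} [MeasurableSpace T] (μ : Measure T) (φ : T → ℝ → ℝ)
    (b w : T → ℝ) : Prop :=
  ∃ ε > (0 : ℝ), ∀ lam : ℝ, |lam| < ε →
    Integrable (fun t => φ t (b t + lam * w t)) μ

/-- Convex-combination integrability lemma. -/
lemma integrable_phi_combo {T : Type*} [MeasurableSpace T] (μ : Measure T)
    (φ : T → ℝ → ℝ) (hφm : Measurable (Function.uncurry φ))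
    (hpos : ∀ᵐ t ∂μ, ∀ x : ℝ, 0 < φ t x)
    (hconv : ∀ᵐ t ∂μ, ConvexOn ℝ Set.univ (φ t))
    (f g h : T → ℝ) (hh : Measurable h) (θ : ℝ) (hθ0 : 0 < θ) (hθ1 : θ < 1)
    (hcomb : ∀ t, h t = θ * f t + (1 - θ) * g t)
    (hif : Integrable (fun t => φ t (f t)) μ)
    (hig : Integrable (fun t => φ t (g t)) μ) :
    Integrable (fun t => φ t (h t)) μ := by
  have hmeas : AEStronglyMeasurable (fun t => φ t (h t)) μ :=
    (hφm.comp (measurable_id.prodMk hh)).aestronglyMeasurable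
  refine Integrable.mono' ((hif.const_mul θ).add (hig.const_mul (1 - θ))) hmeas ?_
  filter_upwards [hpos, hconv] with t hp hcv
  rw [Real.norm_eq_abs, abs_of_pos (hp _)]
  calc φ t (h t) = φ t (θ • f t + (1 - θ) • g t) := by rw [hcomb]; simp [smul_eq_mul]
    _ ≤ θ • φ t (f t) + (1 - θ) • φ t (g t) :=
        hcv.2 (Set.mem_univ _) (Set.mem_univ _) hθ0.le (by linarith) (by ring)
    _ = θ * φ t (f t) + (1 - θ) * φ t (g t) := by simp [smul_eq_mul]

/-- Monotone domination integrability lemma. -/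
lemma integrable_phi_mono {T : Type*} [MeasurableSpace T] (μ : Measure T)
    (φ : T → ℝ → ℝ) (hφm : Measurable (Function.uncurry φ))
    (hpos : ∀ᵐ t ∂μ, ∀ x : ℝ, 0 < φ t x)
    (hmono : ∀ᵐ t ∂μ, StrictMono (φ t))
    (f g : T → ℝ) (hf : Measurable f) (hfg : ∀ t, f t ≤ g t)
    (hig : Integrable (fun t => φ t (g t)) μ) :
    Integrable (fun t => φ t (f t)) μ := by
  have hmeas : AEStronglyMeasurable (fun t => φ t (f t)) μ :=
    (hφm.comp (measurable_id.prodMk hf)).aestronglyMeasurable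
  refine Integrable.mono' hig hmeas ?_
  filter_upwards [hpos, hmono] with t hp hm
  rw [Real.norm_eq_abs, abs_of_pos (hp _)]
  exact hm.monotone (hfg t)

theorem Lphi_eq_of_translate {T : Type*} [MeasurableSpace T]
    (μ : Measure T) [SigmaFinite μ]
    (φ : T → ℝ → ℝ) (hφm : Measurable (Function.uncurry φ))
    (hpos : ∀ᵐ t ∂μ, ∀ x : ℝ, 0 < φ t x)
    (hconv : ∀ᵐ t ∂μ, ConvexOn ℝ Set.univ (φ t))
    (hmono : ∀ᵐ t ∂μ, StrictMono (φ t))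
    (hbot : ∀ᵐ t ∂μ, Filter.Tendsto (φ t) Filter.atBot (nhds 0))
    (htop : ∀ᵐ t ∂μ, Filter.Tendsto (φ t) Filter.atTop Filter.atTop)
    (c u u₀ : T → ℝ) (hc : Measurable c) (hu : Measurable u) (hu₀ : Measurable u₀)
    (hu₀pos : ∀ t, 0 < u₀ t)
    (hcprob : ∫ t, φ t (c t) ∂μ = 1)
    -- condition (a4): for any density of the family, φ(· + λu₀) is integrable
    (hint₀ : ∀ c' : T → ℝ, Measurable c' → (∫ t, φ t (c' t) ∂μ) = 1 →
      ∀ lam : ℝ, 0 < lam → Integrable (fun t => φ t (c' t + lam * u₀ t)) μ)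
    -- u ∈ K^φ_c
    (hKu : ∃ ε > (0 : ℝ), ∀ lam ∈ Set.Ioo (-ε) (1 + ε),
      Integrable (fun t => φ t (c t + lam * u t)) μ)
    (ψ : ℝ) (hψ : ∫ t, φ t (c t + u t - ψ * u₀ t) ∂μ = 1) :
    memLphi μ φ (fun t => c t + u t - ψ * u₀ t)
        (fun t => c t - (c t + u t - ψ * u₀ t)) ∧
      ∀ w : T → ℝ, Measurable w →
        (memLphi μ φ c w ↔ memLphi μ φ (fun t => c t + u t - ψ * u₀ t) w) := by
  obtain ⟨ε, hε, hKI⟩ := hKu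
  set εE : ℝ := min ε 1 with hεEdef
  have hεE : 0 < εE := lt_min hε one_pos
  have hεE1 : εE ≤ 1 := min_le_right _ _
  have hεEε : εE ≤ ε := min_le_left _ _
  -- key claim: integrability of φ(c + s u + η u₀) for s ∈ (-εE/2, 1+εE/2), any η
  have claim1 : ∀ s η : ℝ, -εE / 2 < s → s < 1 + εE / 2 →
      Integrable (fun t => φ t (c t + s * u t + η * u₀ t)) μ := by
    intro s η hs1 hs2
    set θ : ℝ := (1 + εE / 2) / (1 + εE) with hθdef
    have hd : (0:ℝ) < 1 + εE := by linarith
    have hθ0 : 0 < θ := div_pos (by linarith) hd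
    have hθ1 : θ < 1 := by rw [hθdef, div_lt_one hd]; linarith
    have h1θ : 0 < 1 - θ := by linarith
    -- s / θ ∈ (-ε, 1 + ε)
    have hub : s / θ < 1 + ε := by
      rw [div_lt_iff₀ hθ0, hθdef, mul_div_assoc', lt_div_iff₀ hd]
      nlinarith
    have hlb : -ε < s / θ := by
      rw [lt_div_iff₀ hθ0, hθdef, mul_div_assoc', div_lt_iff₀ hd]
      nlinarith
    have hIf : Integrable (fun t => φ t (c t + (s / θ) * u t)) μ :=
      hKI (s / θ) ⟨hlb, hub⟩
    set M : ℝ := |η| / (1 - θ) + 1 with hMdef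
    have hM : 0 < M := by positivity
    have hIgM : Integrable (fun t => φ t (c t + M * u₀ t)) μ :=
      hint₀ c hc hcprob M hM
    have hIg : Integrable (fun t => φ t (c t + (η / (1 - θ)) * u₀ t)) μ := by
      refine integrable_phi_mono μ φ hφm hpos hmono _ _
        (hc.add (hu₀.const_mul _)) (fun t => ?_) hIgM
      have h1 : η / (1 - θ) ≤ M := by
        have h2 : η / (1 - θ) ≤ |η| / (1 - θ) := by
          gcongr
          exact le_abs_self η
        linarith [h2]
      exact add_le_add le_rfl (mul_le_mul_of_nonneg_right h1 (hu₀pos t).le)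
    refine integrable_phi_combo μ φ hφm hpos hconv _ _ _
      ((hc.add (hu.const_mul s)).add (hu₀.const_mul η))
      θ hθ0 hθ1 (fun t => ?_) hIf hIg
    have hθne : θ ≠ 0 := hθ0.ne'
    have h1θne : (1 : ℝ) - θ ≠ 0 := h1θ.ne'
    field_simp
    ring
  -- part 1
  have part1 : memLphi μ φ (fun t => c t + u t - ψ * u₀ t)
      (fun t => c t - (c t + u t - ψ * u₀ t)) := by
    refine ⟨εE / 2, by linarith, fun lam hlam => ?_⟩
    rw [abs_lt] at hlam
    have h := claim1 (1 - lam) (-(1 - lam) * ψ) (by linarith) (by linarith)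
    refine h.congr (Filter.Eventually.of_forall fun t => ?_)
    congr 1
    ring
  refine ⟨part1, fun w hw => ?_⟩
  set t0 : ℝ := εE / (2 + 2 * εE) with ht0def
  have hden : (0:ℝ) < 2 + 2 * εE := by linarith
  have ht00 : 0 < t0 := div_pos hεE hden
  have ht01 : t0 < 1 := by rw [ht0def, div_lt_one hden]; linarith
  have h1t0 : 0 < 1 - t0 := by linarith
  have ht0ne : t0 ≠ 0 := ht00.ne'
  have h1t0ne : (1:ℝ) - t0 ≠ 0 := h1t0.ne'
  -- 1/(1-t0) < 1 + εE/2  and  t0/(1-t0) < εE/2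
  have hid : t0 * (2 + 2 * εE) = εE := by rw [ht0def]; field_simp
  have hkey1 : 1 / (1 - t0) < 1 + εE / 2 := by
    rw [div_lt_iff₀ h1t0]
    nlinarith [hid, hεE, sq_nonneg εE]
  have hkey2 : t0 / (1 - t0) < εE / 2 := by
    rw [div_lt_div_iff₀ h1t0 two_pos]
    nlinarith [hid, hεE, sq_nonneg εE]
  constructor
  · -- memLphi c w → memLphi c̃ w
    rintro ⟨εw, hεw, hwI⟩
    refine ⟨t0 * εw, mul_pos ht00 hεw, fun lam hlam => ?_⟩
    have hlam' : |lam / t0| < εw := by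
      rw [abs_div, abs_of_pos ht00, div_lt_iff₀ ht00]
      calc |lam| < t0 * εw := hlam
        _ = εw * t0 := by ring
    have hIf : Integrable (fun t => φ t (c t + (lam / t0) * w t)) μ := hwI _ hlam'
    have hIg : Integrable (fun t => φ t (c t + (1 / (1 - t0)) * u t +
        (-ψ / (1 - t0)) * u₀ t)) μ := by
      refine claim1 _ _ ?_ hkey1
      have : (0:ℝ) < 1 / (1 - t0) := by positivity
      linarith
    refine integrable_phi_combo μ φ hφm hpos hconv
      (fun t => c t + (lam / t0) * w t)
      (fun t => c t + (1 / (1 - t0)) * u t + (-ψ / (1 - t0)) * u₀ t)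
      _ (((hc.add hu).sub (hu₀.const_mul ψ)).add (hw.const_mul lam))
      t0 ht00 ht01 (fun t => ?_) hIf hIg
    field_simp
    ring
  · -- memLphi c̃ w → memLphi c w
    rintro ⟨εw, hεw, hwI⟩
    refine ⟨t0 * εw, mul_pos ht00 hεw, fun lam hlam => ?_⟩
    have hlam' : |lam / t0| < εw := by
      rw [abs_div, abs_of_pos ht00, div_lt_iff₀ ht00]
      calc |lam| < t0 * εw := hlam
        _ = εw * t0 := by ring
    have hIf : Integrable (fun t => φ t ((c t + u t - ψ * u₀ t) + (lam / t0) * w t)) μ :=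
      hwI _ hlam'
    have hIg : Integrable (fun t => φ t (c t + (-t0 / (1 - t0)) * u t +
        (t0 * ψ / (1 - t0)) * u₀ t)) μ := by
      refine claim1 _ _ ?_ ?_
      · have h2 : -t0 / (1 - t0) = -(t0 / (1 - t0)) := by ring
        rw [h2]
        linarith [hkey2]
      · have : (0:ℝ) < t0 / (1 - t0) := by positivity
        have h2 : -t0 / (1 - t0) = -(t0 / (1 - t0)) := by ring
        rw [h2]
        linarith
    refine integrable_phi_combo μ φ hφm hpos hconv
      (fun t => (c t + u t - ψ * u₀ t) + (lam / t0) * w t)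
      (fun t => c t + (-t0 / (1 - t0)) * u t + (t0 * ψ / (1 - t0)) * u₀ t)
      _ (hc.add (hw.const_mul lam))
      t0 ht00 ht01 (fun t => ?_) hIf hIg
    field_simp
    ring
end

section
/- Let φ(t,·) be strictly convex and differentiable with differentiable strictly increasing inverse φ⁻¹(t,·): (0,∞) → ℝ. Then φ⁻¹(t,u) − φ⁻¹(t,v) ≥ (φ⁻¹)'(t,u)·(u−v) for all u, v > 0, with equality if and only if u = v. Consequently, for probability densities p, q > 0 with respect to μ, the φ-divergence D_φ(p‖q) = E[(φ⁻¹(p) − φ⁻¹(q))/(φ⁻¹)'(p)] / E[u₀/(φ⁻¹)'(p)] is nonnegative, and equals 0 if and only if p = q μ-a.e. (assuming the expectations are finite and the denominator positive). -/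
open MeasureTheory

private lemma key_pointwise (φ ι ι' : ℝ → ℝ)
    (hconv : StrictConvexOn ℝ Set.univ φ)
    (hpos : ∀ x, 0 < φ x) (hdiff : Differentiable ℝ φ)
    (hinv₁ : ∀ x, ι (φ x) = x) (hinv₂ : ∀ y, 0 < y → φ (ι y) = y)
    (hι' : ∀ y, 0 < y → HasDerivAt ι (ι' y) y)
    (hι'pos : ∀ y, 0 < y → 0 < ι' y) :
    ∀ x y : ℝ, 0 < x → 0 < y →
      ι' x * (x - y) ≤ ι x - ι y ∧ (ι x - ι y = ι' x * (x - y) ↔ x = y) := by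
  have strict : ∀ x y : ℝ, 0 < x → 0 < y → x ≠ y → ι' x * (x - y) < ι x - ι y := by
    intro x y hx hy hxy
    set a := ι x with ha
    set b := ι y with hb
    have hφa : φ a = x := hinv₂ x hx
    have hφb : φ b = y := hinv₂ y hy
    have hab : a ≠ b := by
      intro h; apply hxy; rw [← hφa, ← hφb, h]
    have hcomp : HasDerivAt (ι ∘ φ) (ι' (φ a) * deriv φ a) a :=
      (hι' (φ a) (hpos a)).comp a (hdiff a).hasDerivAt
    have hidd : (ι ∘ φ) = id := funext fun z => hinv₁ z
    rw [hidd, hφa] at hcomp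
    have hrel : ι' x * deriv φ a = 1 := hcomp.unique (hasDerivAt_id a)
    have hι'x : 0 < ι' x := hι'pos x hx
    rcases lt_or_gt_of_ne hab with h | h
    · have hs := hconv.lt_slope_of_hasDerivAt (Set.mem_univ a) (Set.mem_univ b) h
        (hdiff a).hasDerivAt
      rw [slope_def_field, lt_div_iff₀ (by linarith)] at hs
      have h2 := mul_lt_mul_of_pos_left hs hι'x
      rw [hφa, hφb] at h2
      nlinarith [h2, hrel, mul_lt_mul_of_pos_left hs hι'x]
    · have hs := hconv.slope_lt_of_hasDerivAt (Set.mem_univ b) (Set.mem_univ a) h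
        (hdiff a).hasDerivAt
      rw [slope_def_field, div_lt_iff₀ (by linarith)] at hs
      have h2 := mul_lt_mul_of_pos_left hs hι'x
      rw [hφa, hφb] at h2
      nlinarith [h2, hrel, mul_lt_mul_of_pos_left hs hι'x]
  intro x y hx hy
  rcases eq_or_ne x y with rfl | hne
  · simp
  · have h := strict x y hx hy hne
    exact ⟨h.le, ⟨fun he => absurd he (by linarith), fun he => absurd he hne⟩⟩

theorem phi_divergence_nonneg {T : Type*} [MeasurableSpace T]
    (μ : Measure T) [SigmaFinite μ]
    (φ : T → ℝ → ℝ) (ι ι' : T → ℝ → ℝ)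
    (hconv : ∀ᵐ t ∂μ, StrictConvexOn ℝ Set.univ (φ t))
    (hmono : ∀ᵐ t ∂μ, StrictMono (φ t))
    (hpos : ∀ᵐ t ∂μ, ∀ x : ℝ, 0 < φ t x)
    (hdiff : ∀ᵐ t ∂μ, Differentiable ℝ (φ t))
    -- ι(t,·) is the inverse of φ(t,·) : ℝ → (0,∞)
    (hinv₁ : ∀ᵐ t ∂μ, ∀ x : ℝ, ι t (φ t x) = x)
    (hinv₂ : ∀ᵐ t ∂μ, ∀ y : ℝ, 0 < y → φ t (ι t y) = y)
    -- ι' is the (positive) derivative of ι on (0,∞), and ι is strictly increasing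
    (hι' : ∀ᵐ t ∂μ, ∀ y : ℝ, 0 < y → HasDerivAt (ι t) (ι' t y) y)
    (hι'pos : ∀ᵐ t ∂μ, ∀ y : ℝ, 0 < y → 0 < ι' t y)
    (hιmono : ∀ᵐ t ∂μ, StrictMonoOn (ι t) (Set.Ioi 0))
    (u₀ : T → ℝ) (hu₀pos : ∀ t, 0 < u₀ t)
    (p q : T → ℝ) (hp : ∀ᵐ t ∂μ, 0 < p t) (hq : ∀ᵐ t ∂μ, 0 < q t)
    (hpint : Integrable p μ) (hqint : Integrable q μ)
    (hp1 : ∫ t, p t ∂μ = 1) (hq1 : ∫ t, q t ∂μ = 1)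
    (hnum : Integrable (fun t => (ι t (p t) - ι t (q t)) / ι' t (p t)) μ)
    (hden : Integrable (fun t => u₀ t / ι' t (p t)) μ)
    (hdenpos : 0 < ∫ t, u₀ t / ι' t (p t) ∂μ) :
    (∀ᵐ t ∂μ, ∀ x y : ℝ, 0 < x → 0 < y →
      ι' t x * (x - y) ≤ ι t x - ι t y ∧ (ι t x - ι t y = ι' t x * (x - y) ↔ x = y)) ∧
    0 ≤ (∫ t, (ι t (p t) - ι t (q t)) / ι' t (p t) ∂μ) /
          (∫ t, u₀ t / ι' t (p t) ∂μ) ∧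
    ((∫ t, (ι t (p t) - ι t (q t)) / ι' t (p t) ∂μ) /
          (∫ t, u₀ t / ι' t (p t) ∂μ) = 0 ↔ p =ᵐ[μ] q) := by
  have hkey : ∀ᵐ t ∂μ, ∀ x y : ℝ, 0 < x → 0 < y →
      ι' t x * (x - y) ≤ ι t x - ι t y ∧ (ι t x - ι t y = ι' t x * (x - y) ↔ x = y) := by
    filter_upwards [hconv, hpos, hdiff, hinv₁, hinv₂, hι', hι'pos] with t h1 h2 h3 h4 h5 h6 h7
    exact key_pointwise (φ t) (ι t) (ι' t) h1 h2 h3 h4 h5 h6 h7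
  have hgint : Integrable (fun t => p t - q t) μ := hpint.sub hqint
  have hg0 : ∫ t, (p t - q t) ∂μ = 0 := by
    rw [integral_sub hpint hqint, hp1, hq1]; ring
  have hh_nonneg : ∀ᵐ t ∂μ,
      0 ≤ (ι t (p t) - ι t (q t)) / ι' t (p t) - (p t - q t) := by
    filter_upwards [hkey, hp, hq, hι'pos] with t hk hpt hqt hι'p
    have h1 := (hk (p t) (q t) hpt hqt).1
    have h2 : 0 < ι' t (p t) := hι'p _ hpt
    rw [sub_nonneg, le_div_iff₀ h2]
    nlinarith
  have hhint : Integrable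
      (fun t => (ι t (p t) - ι t (q t)) / ι' t (p t) - (p t - q t)) μ := hnum.sub hgint
  have hNh : ∫ t, (ι t (p t) - ι t (q t)) / ι' t (p t) ∂μ
      = ∫ t, ((ι t (p t) - ι t (q t)) / ι' t (p t) - (p t - q t)) ∂μ := by
    rw [integral_sub hnum hgint, hg0]; ring
  have hN0 : 0 ≤ ∫ t, (ι t (p t) - ι t (q t)) / ι' t (p t) ∂μ := by
    rw [hNh]; exact integral_nonneg_of_ae hh_nonneg
  refine ⟨hkey, div_nonneg hN0 hdenpos.le, ?_⟩
  rw [div_eq_zero_iff]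
  constructor
  · rintro (hN | hD)
    · have := (integral_eq_zero_iff_of_nonneg_ae hh_nonneg hhint).mp (by rw [← hNh]; exact hN)
      filter_upwards [this, hkey, hp, hq, hι'pos] with t ht hk hpt hqt hι'p
      have h2 : 0 < ι' t (p t) := hι'p _ hpt
      have h3 : (ι t (p t) - ι t (q t)) / ι' t (p t) - (p t - q t) = 0 := ht
      have h4 : ι t (p t) - ι t (q t) = ι' t (p t) * (p t - q t) := by
        field_simp at h3
        linarith
      exact ((hk (p t) (q t) hpt hqt).2).mp h4
    · exact absurd hD (ne_of_gt hdenpos)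
  · intro hpq
    left
    have hz : (fun t => (ι t (p t) - ι t (q t)) / ι' t (p t)) =ᵐ[μ] 0 := by
      filter_upwards [hpq] with t ht
      simp [ht]
    rw [integral_congr_ae hz]; simp
end
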